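/- arXiv:1903.03561 — 5 statements merged into one kernel-verified Lean document; each statement's English description precedes it below -/
import Mathlib

section
/- The double integral of 1/(√(x₁x₂)(1 − x₁x₂)) over the open unit square (0,1)² equals π²/2. -/
/-!
Expand `1 / (√t (1 - t)) = ∑ tⁿ⁻¹ᐟ²` as a geometric series and integrate term by term
(monotone convergence). Each term factorizes over the square into `(∫₀¹ xⁿ⁻¹ᐟ² dx)² = 1 / (n + 1/2)²`,
so the integral is `4 ∑ 1 / (2n + 1)² = 4 · π² / 8`, the odd part of `ζ(2) = π² / 6`.
-/

open MeasureTheory Real Set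

theorem hasSum_one_div_odd_sq :
    HasSum (fun n : ℕ => 1 / (2 * n + 1 : ℝ) ^ 2) (π ^ 2 / 8) := by
  have h_even : HasSum (fun n : ℕ => 1 / ((2 * n : ℕ) : ℝ) ^ 2) (π ^ 2 / 24) := by
    have h_eq : (fun n : ℕ => 1 / ((2 * n : ℕ) : ℝ) ^ 2) = fun n : ℕ => 1 / (n : ℝ) ^ 2 / 4 := by
      ext n; push_cast; ring
    rw [h_eq, show π ^ 2 / 24 = π ^ 2 / 6 / 4 by ring]
    exact hasSum_zeta_two.div_const 4
  obtain ⟨s, h_odd⟩ : Summable (fun n : ℕ => 1 / ((2 * n + 1 : ℕ) : ℝ) ^ 2) :=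
    hasSum_zeta_two.summable.comp_injective (i := fun n : ℕ => 2 * n + 1) fun a b h => by
      simp only at h; omega
  have hs : π ^ 2 / 24 + s = π ^ 2 / 6 :=
    (h_even.even_add_odd (f := fun n : ℕ => 1 / (n : ℝ) ^ 2) h_odd).unique hasSum_zeta_two
  rw [show π ^ 2 / 8 = s by linarith]
  exact_mod_cast h_odd

theorem hasSum_one_div_add_half_sq :
    HasSum (fun n : ℕ => 1 / ((n : ℝ) + 1 / 2) ^ 2) (π ^ 2 / 2) := by
  have h_eq : (fun n : ℕ => 1 / ((n : ℝ) + 1 / 2) ^ 2) = fun n : ℕ => 4 * (1 / (2 * n + 1 : ℝ) ^ 2) := by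
    ext n; field_simp; ring
  rw [h_eq, show π ^ 2 / 2 = 4 * (π ^ 2 / 8) by ring]
  exact hasSum_one_div_odd_sq.mul_left 4

theorem hasSum_rpow_add_half_sub_one {t : ℝ} (ht0 : 0 < t) (ht1 : t < 1) :
    HasSum (fun n : ℕ => t ^ ((n : ℝ) + 1 / 2 - 1)) (1 / (√t * (1 - t))) := by
  have h_term : ∀ n : ℕ, t ^ ((n : ℝ) + 1 / 2 - 1) = t ^ n * (√t)⁻¹ := fun n => by
    rw [show (n : ℝ) + 1 / 2 - 1 = n - 1 / 2 by ring, rpow_sub ht0, rpow_natCast, ← sqrt_eq_rpow,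
      div_eq_mul_inv]
  simp_rw [h_term, one_div, mul_inv, mul_comm (√t)⁻¹]
  exact (hasSum_geometric_of_lt_one ht0.le ht1).mul_right _

theorem lintegral_Ioo_zero_one_rpow_sub_one {s : ℝ} (hs : 0 < s) :
    ∫⁻ x in Ioo (0 : ℝ) 1, ENNReal.ofReal (x ^ (s - 1)) = ENNReal.ofReal (1 / s) := by
  have hr : -1 < s - 1 := by linarith
  have h_int : IntegrableOn (fun x : ℝ => x ^ (s - 1)) (Ioo 0 1) :=
    (intervalIntegral.intervalIntegrable_rpow' hr).1.mono_set Ioo_subset_Ioc_self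
  rw [← ofReal_integral_eq_lintegral_ofReal h_int
    ((ae_restrict_mem measurableSet_Ioo).mono fun x hx => rpow_nonneg hx.1.le _),
    ← integral_Ioc_eq_integral_Ioo, ← intervalIntegral.integral_of_le zero_le_one,
    integral_rpow (.inl hr), one_rpow, zero_rpow (by linarith), sub_zero, sub_add_cancel]

theorem lintegral_unitSquare_mul_rpow_sub_one {s : ℝ} (hs : 0 < s) :
    ∫⁻ p in Ioo (0 : ℝ) 1 ×ˢ Ioo (0 : ℝ) 1, ENNReal.ofReal ((p.1 * p.2) ^ (s - 1)) =
      ENNReal.ofReal (1 / s ^ 2) := by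
  have h_meas : AEMeasurable (fun x : ℝ => ENNReal.ofReal (x ^ (s - 1)))
      (volume.restrict (Ioo 0 1)) := by
    fun_prop
  have h_split : ∀ p ∈ Ioo (0 : ℝ) 1 ×ˢ Ioo (0 : ℝ) 1, ENNReal.ofReal ((p.1 * p.2) ^ (s - 1)) =
      ENNReal.ofReal (p.1 ^ (s - 1)) * ENNReal.ofReal (p.2 ^ (s - 1)) := fun p hp => by
    rw [mul_rpow hp.1.1.le hp.2.1.le, ENNReal.ofReal_mul (rpow_nonneg hp.1.1.le _)]
  rw [setLIntegral_congr_fun (measurableSet_Ioo.prod measurableSet_Ioo) h_split,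
    Measure.volume_eq_prod, ← Measure.prod_restrict, lintegral_prod_mul h_meas h_meas,
    lintegral_Ioo_zero_one_rpow_sub_one hs, ← ENNReal.ofReal_mul (by positivity),
    div_mul_div_comm, one_mul, sq]

theorem stmt_0 :
    ∫ p in (Set.Ioo (0:ℝ) 1 ×ˢ Set.Ioo (0:ℝ) 1),
      1 / (Real.sqrt (p.1 * p.2) * (1 - p.1 * p.2)) = π ^ 2 / 2 := by
  set S := Ioo (0 : ℝ) 1 ×ˢ Ioo (0 : ℝ) 1
  have hS : MeasurableSet S := measurableSet_Ioo.prod measurableSet_Ioo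
  have h_series : ∀ p ∈ S, HasSum (fun n : ℕ => (p.1 * p.2) ^ ((n : ℝ) + 1 / 2 - 1))
      (1 / (√(p.1 * p.2) * (1 - p.1 * p.2))) := fun p hp =>
    hasSum_rpow_add_half_sub_one (mul_pos hp.1.1 hp.2.1)
      (mul_lt_one_of_nonneg_of_lt_one_left hp.1.1.le hp.1.2 hp.2.2.le)
  have h_nonneg : ∀ p ∈ S, ∀ n : ℕ, 0 ≤ (p.1 * p.2) ^ ((n : ℝ) + 1 / 2 - 1) := fun p hp _ =>
    rpow_nonneg (mul_pos hp.1.1 hp.2.1).le _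
  rw [integral_eq_lintegral_of_nonneg_ae
    (ae_restrict_of_forall_mem hS fun p hp => (h_series p hp).nonneg (h_nonneg p hp))
    (Measurable.aestronglyMeasurable (by fun_prop))]
  calc (∫⁻ p in S, ENNReal.ofReal (1 / (√(p.1 * p.2) * (1 - p.1 * p.2)))).toReal
      = (∫⁻ p in S, ∑' n : ℕ, ENNReal.ofReal ((p.1 * p.2) ^ ((n : ℝ) + 1 / 2 - 1))).toReal := by
        rw [setLIntegral_congr_fun hS fun p hp => by
          rw [← (h_series p hp).tsum_eq,
            ENNReal.ofReal_tsum_of_nonneg (h_nonneg p hp) (h_series p hp).summable]]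
    _ = (∑' n : ℕ, ENNReal.ofReal (1 / ((n : ℝ) + 1 / 2) ^ 2)).toReal := by
        rw [lintegral_tsum fun n => by fun_prop]
        exact congrArg _ (tsum_congr fun n => lintegral_unitSquare_mul_rpow_sub_one (by positivity))
    _ = π ^ 2 / 2 := by
        rw [← ENNReal.ofReal_tsum_of_nonneg (fun n => by positivity)
            hasSum_one_div_add_half_sq.summable,
          hasSum_one_div_add_half_sq.tsum_eq, ENNReal.toReal_ofReal (by positivity)]
end

section
/- The double integral of 1/(√(x₁x₂)(1 − x₁x₂)) over (0,1)² equals 4·∑_{n≥0} 1/(2n+1)². -/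
open MeasureTheory Real

lemma key_sum (t : ℝ) (h0 : 0 < t) (h1 : t < 1) :
    ∑' n : ℕ, t ^ ((n:ℝ) - 1/2) = 1 / (Real.sqrt t * (1 - t)) := by
  have he : ∀ n:ℕ, t ^ ((n:ℝ) - 1/2) = t ^ n * t ^ (-(1/2):ℝ) := fun n => by
    rw [← Real.rpow_natCast t n, ← Real.rpow_add h0]; ring_nf
  simp_rw [he]
  rw [tsum_mul_right, tsum_geometric_of_lt_one h0.le h1,
    Real.rpow_neg h0.le, ← Real.sqrt_eq_rpow]
  field_simp

lemma key_summable (t : ℝ) (h0 : 0 < t) (h1 : t < 1) :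
    Summable fun n : ℕ => t ^ ((n:ℝ) - 1/2) := by
  have he : ∀ n:ℕ, t ^ ((n:ℝ) - 1/2) = t ^ n * t ^ (-(1/2):ℝ) := fun n => by
    rw [← Real.rpow_natCast t n, ← Real.rpow_add h0]; ring_nf
  simp_rw [he]
  exact (summable_geometric_of_lt_one h0.le h1).mul_right _

lemma single_integrable (n : ℕ) :
    IntegrableOn (fun x : ℝ => x ^ ((n:ℝ) - 1/2)) (Set.Ioo 0 1) := by
  have h : IntervalIntegrable (fun x : ℝ => x ^ ((n:ℝ) - 1/2)) volume 0 1 :=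
    intervalIntegral.intervalIntegrable_rpow' (by have : (0:ℝ) ≤ n := n.cast_nonneg; linarith)
  exact ((intervalIntegrable_iff_integrableOn_Ioc_of_le zero_le_one).mp h).mono_set
    Set.Ioo_subset_Ioc_self

lemma single_integral (n : ℕ) :
    ∫ x in Set.Ioo (0:ℝ) 1, x ^ ((n:ℝ) - 1/2) = 2 / (2 * n + 1) := by
  rw [← MeasureTheory.integral_Ioc_eq_integral_Ioo,
    ← intervalIntegral.integral_of_le zero_le_one,
    integral_rpow (Or.inl (by have : (0:ℝ) ≤ n := n.cast_nonneg; linarith : (-1:ℝ) < (n:ℝ) - 1/2))]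
  have hne : ((n:ℝ) - 1/2 + 1) = (2 * n + 1)/2 := by ring
  rw [Real.one_rpow, hne, Real.zero_rpow (by positivity), sub_zero, one_div_div]

lemma single_lintegral (n : ℕ) :
    ∫⁻ x in Set.Ioo (0:ℝ) 1, ENNReal.ofReal (x ^ ((n:ℝ) - 1/2)) =
      ENNReal.ofReal (2 / (2 * n + 1)) := by
  have hnn : 0 ≤ᵐ[volume.restrict (Set.Ioo (0:ℝ) 1)] fun x : ℝ => x ^ ((n:ℝ) - 1/2) := by
    filter_upwards [ae_restrict_mem measurableSet_Ioo] with x hx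
    exact Real.rpow_nonneg hx.1.le _
  rw [← MeasureTheory.ofReal_integral_eq_lintegral_ofReal (single_integrable n) hnn,
    single_integral n]

lemma prod_lintegral (n : ℕ) :
    ∫⁻ p in (Set.Ioo (0:ℝ) 1 ×ˢ Set.Ioo (0:ℝ) 1),
      ENNReal.ofReal (p.1 ^ ((n:ℝ) - 1/2) * p.2 ^ ((n:ℝ) - 1/2)) =
    ENNReal.ofReal (2 / (2 * n + 1)) * ENNReal.ofReal (2 / (2 * n + 1)) := by
  have hm : Measurable fun x : ℝ => ENNReal.ofReal (x ^ ((n:ℝ) - 1/2)) := by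
    measurability
  have heq : ∀ᵐ p ∂((volume : Measure (ℝ × ℝ)).restrict
      (Set.Ioo (0:ℝ) 1 ×ˢ Set.Ioo (0:ℝ) 1)),
      ENNReal.ofReal (p.1 ^ ((n:ℝ) - 1/2) * p.2 ^ ((n:ℝ) - 1/2)) =
      ENNReal.ofReal (p.1 ^ ((n:ℝ) - 1/2)) * ENNReal.ofReal (p.2 ^ ((n:ℝ) - 1/2)) := by
    filter_upwards [ae_restrict_mem (measurableSet_Ioo.prod measurableSet_Ioo)] with p hp
    exact ENNReal.ofReal_mul (Real.rpow_nonneg hp.1.1.le _)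
  rw [lintegral_congr_ae heq]
  rw [MeasureTheory.Measure.volume_eq_prod, ← Measure.prod_restrict,
    lintegral_prod_mul hm.aemeasurable hm.aemeasurable, single_lintegral]

lemma summable_odd_sq : Summable fun n : ℕ => 1 / ((2 * n + 1 : ℝ)) ^ 2 := by
  have h1 : Summable fun n : ℕ => 1 / ((n : ℝ)) ^ 2 :=
    Real.summable_one_div_nat_pow.2 one_lt_two
  have h2 := (summable_nat_add_iff 1).2 h1
  refine Summable.of_nonneg_of_le (fun n => by positivity) (fun n => ?_) h2
  have hn : (0:ℝ) ≤ n := n.cast_nonneg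
  push_cast
  gcongr
  linarith

theorem stmt_1 :
    ∫ p in (Set.Ioo (0:ℝ) 1 ×ˢ Set.Ioo (0:ℝ) 1),
      1 / (Real.sqrt (p.1 * p.2) * (1 - p.1 * p.2)) =
    4 * ∑' n : ℕ, 1 / ((2 * n + 1 : ℝ)) ^ 2 := by
  set S := Set.Ioo (0:ℝ) 1 ×ˢ Set.Ioo (0:ℝ) 1 with hS
  have hSm : MeasurableSet S := measurableSet_Ioo.prod measurableSet_Ioo
  have hmem : ∀ p : ℝ × ℝ, p ∈ S → 0 < p.1 * p.2 ∧ p.1 * p.2 < 1 := by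
    rintro p ⟨⟨h1, h2⟩, h3, h4⟩
    constructor
    · positivity
    · nlinarith
  have hf_meas : AEStronglyMeasurable
      (fun p : ℝ × ℝ => 1 / (Real.sqrt (p.1 * p.2) * (1 - p.1 * p.2)))
      (volume.restrict S) := by
    apply Measurable.aestronglyMeasurable
    have hg : Measurable fun p : ℝ × ℝ => Real.sqrt (p.1 * p.2) * (1 - p.1 * p.2) :=
      ((Real.continuous_sqrt.comp (continuous_fst.mul continuous_snd)).mul
        (continuous_const.sub (continuous_fst.mul continuous_snd))).measurable
    exact measurable_const.div hg
  have hnn : 0 ≤ᵐ[volume.restrict S]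
      fun p : ℝ × ℝ => 1 / (Real.sqrt (p.1 * p.2) * (1 - p.1 * p.2)) := by
    filter_upwards [ae_restrict_mem hSm] with p hp
    obtain ⟨h0, h1⟩ := hmem p hp
    have := Real.sqrt_nonneg (p.1 * p.2)
    have : 0 ≤ Real.sqrt (p.1 * p.2) * (1 - p.1 * p.2) := by nlinarith
    positivity
  rw [MeasureTheory.integral_eq_lintegral_of_nonneg_ae hnn hf_meas]
  have step1 : ∫⁻ p in S, ENNReal.ofReal (1 / (Real.sqrt (p.1 * p.2) * (1 - p.1 * p.2))) =
      ∫⁻ p in S, ∑' n : ℕ, ENNReal.ofReal (p.1 ^ ((n:ℝ) - 1/2) * p.2 ^ ((n:ℝ) - 1/2)) := by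
    apply lintegral_congr_ae
    filter_upwards [ae_restrict_mem hSm] with p hp
    obtain ⟨h0, h1⟩ := hmem p hp
    have hx : 0 < p.1 := hp.1.1
    have hy : 0 < p.2 := hp.2.1
    rw [← key_sum _ h0 h1,
      ENNReal.ofReal_tsum_of_nonneg (fun n => Real.rpow_nonneg h0.le _) (key_summable _ h0 h1)]
    congr 1
    ext n
    rw [Real.mul_rpow hx.le hy.le]
  have hm : ∀ n : ℕ, AEMeasurable
      (fun p : ℝ × ℝ => ENNReal.ofReal (p.1 ^ ((n:ℝ) - 1/2) * p.2 ^ ((n:ℝ) - 1/2)))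
      (volume.restrict S) := by
    intro n
    apply Measurable.aemeasurable
    have hr : Measurable fun x : ℝ => x ^ ((n:ℝ) - 1/2) := by measurability
    exact ENNReal.measurable_ofReal.comp
      ((hr.comp measurable_fst).mul (hr.comp measurable_snd))
  rw [step1, lintegral_tsum hm]
  have step2 : ∀ n : ℕ, ∫⁻ p in S,
      ENNReal.ofReal (p.1 ^ ((n:ℝ) - 1/2) * p.2 ^ ((n:ℝ) - 1/2)) =
      ENNReal.ofReal (4 * (1 / ((2 * n + 1 : ℝ)) ^ 2)) := by
    intro n
    rw [hS, prod_lintegral n, ← ENNReal.ofReal_mul (by positivity)]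
    congr 1
    have : ((2:ℝ) * n + 1) ≠ 0 := by positivity
    field_simp
    ring
  simp_rw [step2]
  rw [ENNReal.ofReal_tsum_of_nonneg (fun n => by positivity)
    (summable_odd_sq.mul_left 4) |>.symm, tsum_mul_left,
    ENNReal.toReal_ofReal (mul_nonneg (by norm_num) (tsum_nonneg fun n => by positivity))]
end

section
/- For a = 2, the map (ξ₁,ξ₂) ↦ (ξ₁²(1+ξ₂²)/(1+ξ₁²), ξ₂²(1+ξ₁²)/(1+ξ₂²)) is a bijection from the hyperbolic triangle ℍ² = {(ξ₁,ξ₂) : ξ₁ > 0, ξ₂ > 0, ξ₁ξ₂ < 1} onto the open unit square (0,1)². -/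
open Real

theorem stmt_9 :
    Set.BijOn
      (fun p : ℝ × ℝ =>
        (p.1 ^ 2 * (1 + p.2 ^ 2) / (1 + p.1 ^ 2), p.2 ^ 2 * (1 + p.1 ^ 2) / (1 + p.2 ^ 2)))
      {p : ℝ × ℝ | 0 < p.1 ∧ 0 < p.2 ∧ p.1 * p.2 < 1}
      (Set.Ioo (0:ℝ) 1 ×ˢ Set.Ioo (0:ℝ) 1) := by
  set g : ℝ × ℝ → ℝ × ℝ := fun q =>
    (Real.sqrt (q.1 * (1 - q.2) / (1 - q.1)), Real.sqrt (q.2 * (1 - q.1) / (1 - q.2)))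
  have hmf : Set.MapsTo
      (fun p : ℝ × ℝ =>
        (p.1 ^ 2 * (1 + p.2 ^ 2) / (1 + p.1 ^ 2), p.2 ^ 2 * (1 + p.1 ^ 2) / (1 + p.2 ^ 2)))
      {p : ℝ × ℝ | 0 < p.1 ∧ 0 < p.2 ∧ p.1 * p.2 < 1}
      (Set.Ioo (0:ℝ) 1 ×ˢ Set.Ioo (0:ℝ) 1) := by
    rintro ⟨x, y⟩ ⟨hx, hy, hxy⟩
    simp only [Set.mem_setOf_eq] at *
    replace hx : 0 < x := hx
    replace hy : 0 < y := hy
    replace hxy : x * y < 1 := hxy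
    have h1 : (0:ℝ) < 1 + x ^ 2 := by positivity
    have h2 : (0:ℝ) < 1 + y ^ 2 := by positivity
    have hsq : x ^ 2 * y ^ 2 < 1 := by nlinarith [mul_pos hx hy]
    constructor
    · constructor
      · positivity
      · rw [div_lt_one h1]; nlinarith
    · constructor
      · positivity
      · rw [div_lt_one h2]; nlinarith
  have hmg : Set.MapsTo g (Set.Ioo (0:ℝ) 1 ×ˢ Set.Ioo (0:ℝ) 1)
      {p : ℝ × ℝ | 0 < p.1 ∧ 0 < p.2 ∧ p.1 * p.2 < 1} := by
    rintro ⟨u, v⟩ ⟨⟨hu0, hu1⟩, ⟨hv0, hv1⟩⟩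
    have hu1' : (0:ℝ) < 1 - u := by linarith
    have hv1' : (0:ℝ) < 1 - v := by linarith
    have hs : (0:ℝ) < u * (1 - v) / (1 - u) := by positivity
    have ht : (0:ℝ) < v * (1 - u) / (1 - v) := by positivity
    refine ⟨Real.sqrt_pos.2 hs, Real.sqrt_pos.2 ht, ?_⟩
    rw [← Real.sqrt_mul hs.le]
    have : u * (1 - v) / (1 - u) * (v * (1 - u) / (1 - v)) = u * v := by
      field_simp
    rw [this]
    have : u * v < 1 := by nlinarith
    calc Real.sqrt (u * v) < Real.sqrt 1 := Real.sqrt_lt_sqrt (by positivity) this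
      _ = 1 := Real.sqrt_one
  have hinv : Set.InvOn g
      (fun p : ℝ × ℝ =>
        (p.1 ^ 2 * (1 + p.2 ^ 2) / (1 + p.1 ^ 2), p.2 ^ 2 * (1 + p.1 ^ 2) / (1 + p.2 ^ 2)))
      {p : ℝ × ℝ | 0 < p.1 ∧ 0 < p.2 ∧ p.1 * p.2 < 1}
      (Set.Ioo (0:ℝ) 1 ×ˢ Set.Ioo (0:ℝ) 1) := by
    constructor
    · rintro ⟨x, y⟩ ⟨hx, hy, hxy⟩
      replace hx : 0 < x := hx
      replace hy : 0 < y := hy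
      replace hxy : x * y < 1 := hxy
      have h1 : (0:ℝ) < 1 + x ^ 2 := by positivity
      have h2 : (0:ℝ) < 1 + y ^ 2 := by positivity
      have hst : x ^ 2 * y ^ 2 < 1 := by nlinarith [mul_pos hx hy]
      have hst' : (0:ℝ) < 1 - x ^ 2 * y ^ 2 := by linarith
      simp only [g]
      have e1 : x ^ 2 * (1 + y ^ 2) / (1 + x ^ 2) *
          (1 - y ^ 2 * (1 + x ^ 2) / (1 + y ^ 2)) /
          (1 - x ^ 2 * (1 + y ^ 2) / (1 + x ^ 2)) = x ^ 2 := by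
        rw [div_eq_iff]
        · field_simp; ring
        · have : 1 - x ^ 2 * (1 + y ^ 2) / (1 + x ^ 2) =
            (1 - x ^ 2 * y ^ 2) / (1 + x ^ 2) := by field_simp; ring
          rw [this]; positivity
      have e2 : y ^ 2 * (1 + x ^ 2) / (1 + y ^ 2) *
          (1 - x ^ 2 * (1 + y ^ 2) / (1 + x ^ 2)) /
          (1 - y ^ 2 * (1 + x ^ 2) / (1 + y ^ 2)) = y ^ 2 := by
        rw [div_eq_iff]
        · field_simp; ring
        · have : 1 - y ^ 2 * (1 + x ^ 2) / (1 + y ^ 2) =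
            (1 - x ^ 2 * y ^ 2) / (1 + y ^ 2) := by field_simp; ring
          rw [this]; positivity
      rw [e1, e2, Real.sqrt_sq hx.le, Real.sqrt_sq hy.le]
    · rintro ⟨u, v⟩ ⟨⟨hu0, hu1⟩, ⟨hv0, hv1⟩⟩
      have hu1' : (0:ℝ) < 1 - u := by linarith
      have hv1' : (0:ℝ) < 1 - v := by linarith
      have hs : (0:ℝ) ≤ u * (1 - v) / (1 - u) := by positivity
      have ht : (0:ℝ) ≤ v * (1 - u) / (1 - v) := by positivity
      simp only [g, Real.sq_sqrt hs, Real.sq_sqrt ht]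
      have e1 : u * (1 - v) / (1 - u) * (1 + v * (1 - u) / (1 - v)) /
          (1 + u * (1 - v) / (1 - u)) = u := by
        rw [div_eq_iff]
        · field_simp; ring
        · have h : (0:ℝ) < u * (1 - v) / (1 - u) := by positivity
          linarith
      have e2 : v * (1 - u) / (1 - v) * (1 + u * (1 - v) / (1 - u)) /
          (1 + v * (1 - u) / (1 - v)) = v := by
        rw [div_eq_iff]
        · field_simp; ring
        · have h : (0:ℝ) < v * (1 - u) / (1 - v) := by positivity
          linarith
      rw [e1, e2]
  exact hinv.bijOn hmf hmg
end

section
/- For integers a ≥ 2 and k ≥ 1, the map ξ ↦ (ξ_i^a(1+ξ_{i+1}^a)/(1+ξ_i^a))_{i=1}^k (cyclic indices) is a bijection from the hyperbolic polytope ℍ^k = {ξ ∈ ℝ^k : ξ_i > 0 and ξ_iξ_{i+1} < 1 for all i (cyclically)} onto (0,1)^k. -/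
/-!
Since `ξ ↦ ξ ^ a` (coordinatewise) permutes `ℍ^k` and the map in question is `cyclicRatio`
composed with it, it suffices to treat `cyclicRatio u i = u i (1 + u (i+1)) / (1 + u i)`.
The equation `cyclicRatio u = η` is the cyclic system `u i = η i / (1 - η i + u (i+1))`.

Existence: each of these Möbius maps sends `[0, B]` into itself for `B = ∑ η i / (1 - η i)`,
so their composite has a fixed point there by the intermediate value theorem, and the partial
composites applied to that point solve the system.

Uniqueness: for two positive solutions `u, v`, the quantity `(u i - v i)² / (u i v i)` is
`c i = (u i u (i+1) / η i) (v i v (i+1) / η i) < 1` times its value at `i + 1`, so it vanishes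
at an index where it is maximal, hence everywhere.

Membership: `u i u (i+1) < η i < 1` for every solution.
-/

open Set

theorem eq_zero_of_le_mul_comp {ι R : Type*} [Finite ι] [Semiring R] [LinearOrder R]
    [IsStrictOrderedRing R] (s : ι → ι) {q c : ι → R} (hq : ∀ i, 0 ≤ q i)
    (hc₀ : ∀ i, 0 ≤ c i) (hc₁ : ∀ i, c i < 1) (h : ∀ i, q i ≤ c i * q (s i)) : q = 0 := by
  funext i
  have : Nonempty ι := ⟨i⟩
  obtain ⟨m, hm⟩ := Finite.exists_max q
  have hqm : q m ≤ 0 := not_lt.1 fun hpos => lt_irrefl (q m) <| calc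
    q m ≤ c m * q (s m) := h m
    _ ≤ c m * q m := mul_le_mul_of_nonneg_left (hm _) (hc₀ m)
    _ < q m := mul_lt_of_lt_one_left hpos (hc₁ m)
  exact le_antisymm ((hm i).trans hqm) (hq i)

section CyclicSystem
variable {α : Type*}

def continuousSelfMapsOn [TopologicalSpace α] (S : Set α) : Submonoid (Function.End α) where
  carrier := {g | MapsTo g S S ∧ ContinuousOn g S}
  one_mem' := ⟨mapsTo_id S, continuousOn_id⟩
  mul_mem' hg hh := ⟨hg.1.comp hh.1, hg.2.comp hh.2 hh.1⟩

theorem prod_drop_ofFn_apply_of_isFixedPt {k : ℕ} [NeZero k] (f : Fin k → Function.End α) {t : α}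
    (ht : Function.IsFixedPt (List.ofFn f).prod t) (i : Fin k) :
    ((List.ofFn f).drop i).prod t = f i (((List.ofFn f).drop ↑(i + 1)).prod t) := by
  rw [List.drop_eq_getElem_cons (by simp), List.prod_cons, List.getElem_ofFn, Function.End.mul_def]
  obtain ⟨n, rfl⟩ := Nat.exists_eq_succ_of_ne_zero (NeZero.ne k)
  rw [Fin.val_add_one]
  split_ifs with hi
  · subst hi
    rw [List.drop_zero, ht.eq, List.drop_of_length_le (by simp), List.prod_nil]
    rfl
  · rfl

theorem exists_cyclic_solution_mem_Icc [ConditionallyCompleteLinearOrder α] [TopologicalSpace α]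
    [OrderTopology α] [DenselyOrdered α] {k : ℕ} [NeZero k] {a b : α} (hab : a ≤ b)
    (f : Fin k → Function.End α) (hf : ∀ i, f i ∈ continuousSelfMapsOn (Icc a b)) :
    ∃ u : Fin k → α, (∀ i, u i ∈ Icc a b) ∧ ∀ i, u i = f i (u (i + 1)) := by
  -- `u i := (f i ∘ ⋯ ∘ f (k-1)) t` for a fixed point `t` of `f 0 ∘ ⋯ ∘ f (k-1)`
  have hmem : ∀ n, ((List.ofFn f).drop n).prod ∈ continuousSelfMapsOn (Icc a b) := fun n =>
    Submonoid.list_prod_mem _ fun g hg => by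
      obtain ⟨i, rfl⟩ := List.mem_ofFn.1 (List.mem_of_mem_drop hg)
      exact hf i
  obtain ⟨t, ht, hfix⟩ := exists_mem_Icc_isFixedPt_of_mapsTo (hmem 0).2 hab (hmem 0).1
  exact ⟨fun i => ((List.ofFn f).drop i).prod t, fun i => (hmem i).1 ht,
    prod_drop_ofFn_apply_of_isFixedPt f hfix⟩

end CyclicSystem

section HyperbolicPolytope
variable {k : ℕ} [NeZero k]

def hyperbolicPolytope (k : ℕ) [NeZero k] : Set (Fin k → ℝ) :=
  {ξ | ∀ i, 0 < ξ i ∧ ξ i * ξ (i + 1) < 1}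

noncomputable def cyclicRatio (u : Fin k → ℝ) : Fin k → ℝ :=
  fun i => u i * (1 + u (i + 1)) / (1 + u i)

theorem cyclicRatio_eq_iff {u η : Fin k → ℝ} (hu : ∀ i, 0 ≤ u i) :
    cyclicRatio u = η ↔ ∀ i, u i * (1 - η i + u (i + 1)) = η i := by
  refine funext_iff.trans (forall_congr' fun i => ?_)
  rw [cyclicRatio, div_eq_iff (by linarith [hu i])]
  constructor <;> intro h <;> linarith

theorem mul_succ_lt_of_cyclic_eq {u η : Fin k → ℝ} {i : Fin k} (hu : 0 < u i) (hη : η i < 1)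
    (h : u i * (1 - η i + u (i + 1)) = η i) : u i * u (i + 1) < η i := by
  nlinarith [mul_pos hu (sub_pos.2 hη)]

theorem mapsTo_cyclicRatio :
    MapsTo cyclicRatio (hyperbolicPolytope k) (univ.pi fun _ => Ioo (0 : ℝ) 1) := by
  intro u hu i _
  obtain ⟨hui, hprod⟩ := hu i
  have hsucc := (hu (i + 1)).1
  refine ⟨by unfold cyclicRatio; positivity, ?_⟩
  rw [cyclicRatio, div_lt_one (by positivity)]
  linarith

theorem eq_of_cyclic_eq {η u v : Fin k → ℝ} (hη : ∀ i, η i < 1)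
    (hu : ∀ i, 0 < u i) (hv : ∀ i, 0 < v i)
    (hequ : ∀ i, u i * (1 - η i + u (i + 1)) = η i)
    (heqv : ∀ i, v i * (1 - η i + v (i + 1)) = η i) : u = v := by
  set q : Fin k → ℝ := fun i => (u i - v i) ^ 2 / (u i * v i)
  set c : Fin k → ℝ := fun i => u i * u (i + 1) / η i * (v i * v (i + 1) / η i)
  have hltu := fun i => mul_succ_lt_of_cyclic_eq (hu i) (hη i) (hequ i)
  have hltv := fun i => mul_succ_lt_of_cyclic_eq (hv i) (hη i) (heqv i)
  have hη₀ : ∀ i, 0 < η i := fun i => (mul_pos (hu i) (hu (i + 1))).trans (hltu i)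
  have hrec : ∀ i, q i = c i * q (i + 1) := by
    intro i
    have hdiff : (u i - v i) * η i = u i * v i * (v (i + 1) - u (i + 1)) := by
      linear_combination v i * hequ i - u i * heqv i
    have := hu i; have := hv i; have := hu (i + 1); have := hv (i + 1); have := hη₀ i
    simp only [q, c]
    field_simp
    linear_combination ((u i - v i) * η i + u i * v i * (v (i + 1) - u (i + 1))) * hdiff
  have hq : q = 0 := by
    refine eq_zero_of_le_mul_comp (· + 1) (fun i => ?_) (fun i => ?_) (fun i => ?_)
      (fun i => (hrec i).le)
    · have := hu i; have := hv i
      positivity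
    · have := hη₀ i; have := hu i; have := hv i; have := hu (i + 1); have := hv (i + 1)
      positivity
    · have := hη₀ i; have := hu i; have := hu (i + 1)
      exact mul_lt_one_of_nonneg_of_lt_one_left (by positivity)
        ((div_lt_one (hη₀ i)).2 (hltu i)) ((div_le_one (hη₀ i)).2 (hltv i).le)
  funext i
  have hqi := congrFun hq i
  rw [Pi.zero_apply, div_eq_zero_iff, pow_eq_zero_iff two_ne_zero, sub_eq_zero] at hqi
  exact hqi.resolve_right (mul_pos (hu i) (hv i)).ne'

theorem exists_pos_cyclic_solution {η : Fin k → ℝ} (hη : ∀ i, η i ∈ Ioo 0 1) :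
    ∃ u : Fin k → ℝ, (∀ i, 0 < u i) ∧ ∀ i, u i * (1 - η i + u (i + 1)) = η i := by
  set B := ∑ i, η i / (1 - η i)
  have hterm : ∀ i, 0 ≤ η i / (1 - η i) := fun i => (div_pos (hη i).1 (sub_pos.2 (hη i).2)).le
  let f : Fin k → Function.End ℝ := fun i t => η i / (1 - η i + t)
  have hden : ∀ i, ∀ t ∈ Icc 0 B, 0 < 1 - η i + t := fun i t ht => by linarith [ht.1, (hη i).2]
  have hf : ∀ i, f i ∈ continuousSelfMapsOn (Icc 0 B) := fun i =>
    ⟨fun t ht => ⟨(div_pos (hη i).1 (hden i t ht)).le, calc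
      η i / (1 - η i + t) ≤ η i / (1 - η i) :=
        div_le_div_of_nonneg_left (hη i).1.le (by linarith [(hη i).2]) (by linarith [ht.1])
      _ ≤ B := Finset.single_le_sum (fun j _ => hterm j) (Finset.mem_univ i)⟩,
    continuousOn_const.div (by fun_prop) fun t ht => (hden i t ht).ne'⟩
  obtain ⟨u, hmem, hu⟩ :=
    exists_cyclic_solution_mem_Icc (Finset.sum_nonneg fun i _ => hterm i) f hf
  refine ⟨u, fun i => ?_, fun i => ?_⟩
  · rw [hu i]
    exact div_pos (hη i).1 (hden i _ (hmem (i + 1)))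
  · rw [hu i]
    exact div_mul_cancel₀ _ (hden i _ (hmem (i + 1))).ne'

theorem bijOn_cyclicRatio :
    BijOn cyclicRatio (hyperbolicPolytope k) (univ.pi fun _ => Ioo (0 : ℝ) 1) := by
  refine ⟨mapsTo_cyclicRatio, fun u hu v hv huv => ?_, fun η hη => ?_⟩
  · have hη := mapsTo_cyclicRatio hu
    exact eq_of_cyclic_eq (fun i => (hη i trivial).2) (fun i => (hu i).1) (fun i => (hv i).1)
      ((cyclicRatio_eq_iff fun i => (hu i).1.le).1 rfl)
      ((cyclicRatio_eq_iff fun i => (hv i).1.le).1 huv.symm)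
  · obtain ⟨u, hu, heq⟩ := exists_pos_cyclic_solution fun i => hη i trivial
    refine ⟨u, fun i => ⟨hu i, ?_⟩, (cyclicRatio_eq_iff fun i => (hu i).le).2 heq⟩
    exact (mul_succ_lt_of_cyclic_eq (hu i) (hη i trivial).2 (heq i)).trans (hη i trivial).2

theorem pow_mem_hyperbolicPolytope_iff {a : ℕ} (ha : a ≠ 0) {ξ : Fin k → ℝ}
    (hξ : ∀ i, 0 < ξ i) :
    (fun i => ξ i ^ a) ∈ hyperbolicPolytope k ↔ ξ ∈ hyperbolicPolytope k := by
  refine forall_congr' fun i => and_congr (iff_of_true (pow_pos (hξ i) a) (hξ i)) ?_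
  rw [← mul_pow]
  exact pow_lt_one_iff_of_nonneg (mul_pos (hξ i) (hξ (i + 1))).le ha

theorem bijOn_pow_hyperbolicPolytope {a : ℕ} (ha : a ≠ 0) :
    BijOn (fun ξ i => ξ i ^ a) (hyperbolicPolytope k) (hyperbolicPolytope k) := by
  refine ⟨fun ξ hξ => (pow_mem_hyperbolicPolytope_iff ha fun i => (hξ i).1).2 hξ,
    fun ξ hξ ξ' hξ' h => funext fun i => ?_, fun u hu => ?_⟩
  · exact (pow_left_inj₀ (hξ i).1.le (hξ' i).1.le ha).1 (congrFun h i)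
  · have hroot : (fun i => (u i ^ (a⁻¹ : ℝ)) ^ a) = u :=
      funext fun i => Real.rpow_inv_natCast_pow (hu i).1.le ha
    refine ⟨fun i => u i ^ (a⁻¹ : ℝ), ?_, hroot⟩
    exact (pow_mem_hyperbolicPolytope_iff ha fun i => Real.rpow_pos_of_pos (hu i).1 _).1
      (by rwa [hroot])

end HyperbolicPolytope

theorem stmt_10_general (a k : ℕ) (ha : 2 ≤ a) [NeZero k] :
    Set.BijOn
      (fun ξ : Fin k → ℝ => fun i => ξ i ^ a * (1 + ξ (i + 1) ^ a) / (1 + ξ i ^ a))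
      {ξ : Fin k → ℝ | ∀ i, 0 < ξ i ∧ ξ i * ξ (i + 1) < 1}
      (Set.pi Set.univ fun _ : Fin k => Set.Ioo (0:ℝ) 1) :=
  bijOn_cyclicRatio.comp (bijOn_pow_hyperbolicPolytope (by omega))

theorem stmt_10 (a k : ℕ) (ha : 2 ≤ a) (hk : 1 ≤ k) [NeZero k] :
    Set.BijOn
      (fun ξ : Fin k → ℝ => fun i => ξ i ^ a * (1 + ξ (i + 1) ^ a) / (1 + ξ i ^ a))
      {ξ : Fin k → ℝ | ∀ i, 0 < ξ i ∧ ξ i * ξ (i + 1) < 1}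
      (Set.pi Set.univ fun _ : Fin k => Set.Ioo (0:ℝ) 1) :=
  stmt_10_general a k ha
end

section
/- For every real number a > 1, ∫₀^∞ 1/(1+x^a) dx = (π/a)·csc(π/a). -/
/-! The substitution `y = x ^ a` turns the integral into `∫₀^∞ y^(1/a - 1) / (1 + y) dy / a`,
and `y = t / (1 - t)` turns that into the Beta integral `B(1/a, 1 - 1/a) = Γ(1/a) Γ(1 - 1/a)`,
which the reflection formula evaluates to `π / sin (π / a)`. -/

open MeasureTheory Real Set

theorem integral_Ioo_rpow_mul_one_sub_rpow {u v : ℝ} (hu : 0 < u) (hv : 0 < v) :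
    ∫ t in Ioo (0 : ℝ) 1, t ^ (u - 1) * (1 - t) ^ (v - 1) = Gamma u * Gamma v / Gamma (u + v) := by
  have hbeta := Complex.betaIntegral_eq_Gamma_mul_div u v (by simpa using hu) (by simpa using hv)
  rw [Complex.betaIntegral, intervalIntegral.integral_of_le zero_le_one,
    integral_Ioc_eq_integral_Ioo, ← Complex.ofReal_add, Complex.Gamma_ofReal,
    Complex.Gamma_ofReal, Complex.Gamma_ofReal] at hbeta
  rw [← Complex.ofReal_inj, ← integral_complex_ofReal, Complex.ofReal_div, Complex.ofReal_mul,
    ← hbeta]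
  refine setIntegral_congr_fun measurableSet_Ioo fun t ⟨ht0, ht1⟩ => ?_
  rw [Complex.ofReal_mul, Complex.ofReal_cpow ht0.le, Complex.ofReal_cpow (by linarith)]
  push_cast
  rfl

theorem integral_Ioi_eq_integral_Ioo_div_one_sub {F : Type*} [NormedAddCommGroup F]
    [NormedSpace ℝ F] (g : ℝ → F) :
    ∫ x in Ioi (0 : ℝ), g x = ∫ t in Ioo (0 : ℝ) 1, ((1 - t) ^ 2)⁻¹ • g (t / (1 - t)) := by
  have himage : (fun t : ℝ => t / (1 - t)) '' Ioo 0 1 = Ioi 0 := by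
    refine Subset.antisymm (image_subset_iff.2 fun t ⟨ht0, ht1⟩ => div_pos ht0 (by linarith))
      fun x (hx : 0 < x) => ⟨x / (1 + x), ⟨by positivity, ?_⟩, ?_⟩
    · rw [div_lt_one (by linarith)]; linarith
    · field_simp; ring
  have hderiv : ∀ t ∈ Ioo (0 : ℝ) 1,
      HasDerivWithinAt (fun t : ℝ => t / (1 - t)) ((1 - t) ^ 2)⁻¹ (Ioo 0 1) t := by
    intro t ⟨_, ht1⟩
    have h := (hasDerivAt_id t).div ((hasDerivAt_id t).const_sub 1) (sub_ne_zero.2 ht1.ne')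
    exact h.hasDerivWithinAt.congr_deriv (by simp only [id]; ring)
  have hinj : InjOn (fun t : ℝ => t / (1 - t)) (Ioo 0 1) := by
    intro x ⟨_, hx⟩ y ⟨_, hy⟩ h
    have : 1 - x ≠ 0 := by linarith
    have : 1 - y ≠ 0 := by linarith
    field_simp at h
    linarith
  rw [← himage, integral_image_eq_integral_abs_deriv_smul measurableSet_Ioo hderiv hinj]
  refine setIntegral_congr_fun measurableSet_Ioo fun t _ => ?_
  rw [abs_of_nonneg (by positivity)]

theorem integral_Ioi_rpow_div_rpow_one_add {u v : ℝ} (hu : 0 < u) (hv : 0 < v) :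
    ∫ x in Ioi (0 : ℝ), x ^ (u - 1) / (1 + x) ^ (u + v) = Gamma u * Gamma v / Gamma (u + v) := by
  rw [integral_Ioi_eq_integral_Ioo_div_one_sub, ← integral_Ioo_rpow_mul_one_sub_rpow hu hv]
  refine setIntegral_congr_fun measurableSet_Ioo fun t ⟨ht0, ht1⟩ => ?_
  have hw : 0 < 1 - t := by linarith
  have hsplit : (1 - t) ^ (u + v) = (1 - t) ^ (u - 1) * (1 - t) ^ (v - 1) * (1 - t) ^ 2 := by
    rw [← rpow_add hw, ← rpow_natCast, ← rpow_add hw]; ring_nf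
  have hone_add : 1 + t / (1 - t) = (1 - t)⁻¹ := by field_simp; ring
  rw [smul_eq_mul, hone_add, inv_rpow hw.le, div_rpow ht0.le hw.le, hsplit]
  have : (1 - t) ^ (u - 1) ≠ 0 := by positivity
  field_simp

theorem integral_Ioi_rpow_div_one_add {s : ℝ} (hs0 : 0 < s) (hs1 : s < 1) :
    ∫ x in Ioi (0 : ℝ), x ^ (s - 1) / (1 + x) = π / sin (π * s) := by
  have h := integral_Ioi_rpow_div_rpow_one_add hs0 (sub_pos.2 hs1)
  simp_rw [add_sub_cancel, Real.rpow_one, Gamma_one, div_one, Gamma_mul_Gamma_one_sub] at h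
  exact h

theorem integral_Ioi_rpow_div_one_add_rpow {a b : ℝ} (hb : 0 < b) (hba : b < a) :
    ∫ x in Ioi (0 : ℝ), x ^ (b - 1) / (1 + x ^ a) = π / a * (sin (π * b / a))⁻¹ := by
  have ha : 0 < a := hb.trans hba
  have h := integral_comp_rpow_Ioi (fun y => y ^ (b / a - 1) / (1 + y)) ha.ne'
  rw [integral_Ioi_rpow_div_one_add (by positivity) ((div_lt_one ha).2 hba)] at h
  have hintegrand : ∀ x ∈ Ioi (0 : ℝ),
      (|a| * x ^ (a - 1)) • ((x ^ a) ^ (b / a - 1) / (1 + x ^ a)) =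
        a * (x ^ (b - 1) / (1 + x ^ a)) := by
    intro x (hx : 0 < x)
    rw [smul_eq_mul, abs_of_pos ha, ← rpow_mul hx.le, mul_assoc, mul_div_assoc', ← rpow_add hx]
    congr 3; field_simp; ring
  rw [setIntegral_congr_fun measurableSet_Ioi hintegrand, integral_const_mul] at h
  rw [mul_div_assoc, ← div_eq_mul_inv, div_right_comm, ← h, mul_div_cancel_left₀ _ ha.ne']

theorem stmt_11 (a : ℝ) (ha : 1 < a) :
    ∫ x in Set.Ioi (0:ℝ), 1 / (1 + x ^ a) = π / a * (Real.sin (π / a))⁻¹ := by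
  simpa using integral_Ioi_rpow_div_one_add_rpow one_pos ha
end
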